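/- arXiv:0803.0800 — 3 statements merged into one kernel-verified Lean document; each statement's English description precedes it below -/
import Mathlib

section
/- Suppose conditions (1.2) and (1.6) hold. Then for all x ∈ ℝ and all t ∈ [x − d(x), x + d(x)], the following estimates hold: e⁻²ρ(x) ≤ ρ(t) ≤ e²ρ(x), where ρ = uv. -/
open MeasureTheory Set Filter
open scoped ENNReal

noncomputable section

/-- Conditions (1.2): `r > 0`, `q ≥ 0`, `1/r ∈ L¹loc(ℝ)`, `q ∈ L¹loc(ℝ)`. -/
def Cond12 (r q : ℝ → ℝ) : Prop :=
  (∀ x : ℝ, 0 < r x) ∧ (∀ x : ℝ, 0 ≤ q x) ∧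
    LocallyIntegrable (fun x : ℝ => (r x)⁻¹) volume ∧ LocallyIntegrable q volume

/-- Condition (1.4): `∫_{-∞}^0 dt/r(t) = ∫_0^∞ dt/r(t) = ∞`. -/
def Cond14 (r : ℝ → ℝ) : Prop :=
  (∫⁻ t in Iic (0 : ℝ), ENNReal.ofReal (r t)⁻¹) = ⊤ ∧
  (∫⁻ t in Ici (0 : ℝ), ENNReal.ofReal (r t)⁻¹) = ⊤

/-- Condition (1.5): `∫_{-∞}^x q > 0` and `∫_x^∞ q > 0` for all `x`. -/
def Cond15 (q : ℝ → ℝ) : Prop :=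
  ∀ x : ℝ, (0 < ∫⁻ t in Iic x, ENNReal.ofReal (q t)) ∧
           (0 < ∫⁻ t in Ici x, ENNReal.ofReal (q t))

/-- Condition (1.6): `(∫_{x-d}^x 1/r)·(∫_{x-d}^x q) → ∞` as `|d| → ∞` (for `d < 0` the
integrals are taken over `[x, x-d]`; the set `uIoc (x-d) x` covers both orientations). -/
def Cond16 (r q : ℝ → ℝ) : Prop :=
  ∀ x : ℝ, Tendsto (fun d : ℝ =>
      (∫ t in uIoc (x - d) x, (r t)⁻¹) * ∫ t in uIoc (x - d) x, q t)
    (atTop ⊔ atBot) atTop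

/-- `y` is a solution of `-(r y')' + q y = f` with (a.e.) derivative `y'`:
`y` and `r·y'` are (locally) absolutely continuous, expressed via the integral
characterization, and the equation holds. -/
def IsSolutionWith (r q f y y' : ℝ → ℝ) : Prop :=
  (∀ a b : ℝ, IntervalIntegrable y' volume a b) ∧
  (∀ x : ℝ, y x = y 0 + ∫ t in (0:ℝ)..x, y' t) ∧
  (∀ a b : ℝ, IntervalIntegrable (fun t => q t * y t - f t) volume a b) ∧
  (∀ x : ℝ, r x * y' x = r 0 * y' 0 + ∫ t in (0:ℝ)..x, (q t * y t - f t))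

/-- `y` is a solution of `-(r y')' + q y = f`. -/
def IsSolution (r q f y : ℝ → ℝ) : Prop := ∃ y' : ℝ → ℝ, IsSolutionWith r q f y y'

/-- `z` is a solution of the homogeneous equation `(r z')' = q z` with derivative `z'`. -/
def IsSolutionHom (r q z z' : ℝ → ℝ) : Prop := IsSolutionWith r q (fun _ => 0) z z'

/-- Membership in `L_p(ℝ)`. -/
def MemLP (f : ℝ → ℝ) (p : ℝ) : Prop := MemLp f (ENNReal.ofReal p) volume

/-- The `L_p(ℝ)` norm. -/
def lpNorm (f : ℝ → ℝ) (p : ℝ) : ℝ≥0∞ := eLpNorm f (ENNReal.ofReal p) volume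

/-- The equation `-(r y')' + q y = f` is correctly solvable in `L_p(ℝ)`: for every
`f ∈ L_p` there is a unique solution `y ∈ L_p`, and `‖y‖_p ≤ c(p)‖f‖_p` with an
absolute constant `c(p) > 0`. -/
def CorrectlySolvable (r q : ℝ → ℝ) (p : ℝ) : Prop :=
  (∀ f : ℝ → ℝ, MemLP f p → ∃! y : ℝ → ℝ, IsSolution r q f y ∧ MemLP y p) ∧
  ∃ c : ℝ, 0 < c ∧ ∀ f y : ℝ → ℝ, MemLP f p → IsSolution r q f y → MemLP y p →
    lpNorm y p ≤ ENNReal.ofReal c * lpNorm f p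

/-- `{u, v}` (with derivatives `u'`, `v'`) is the fundamental system of solutions of
`(r z')' = q z` with properties (1.8)-(1.11). -/
def IsFSS (r q u u' v v' : ℝ → ℝ) : Prop :=
  IsSolutionHom r q u u' ∧ IsSolutionHom r q v v' ∧
  (∀ x : ℝ, 0 < u x) ∧ (∀ x : ℝ, 0 < v x) ∧
  (∀ x : ℝ, 0 ≤ v' x) ∧ (∀ x : ℝ, u' x ≤ 0) ∧
  (∀ x : ℝ, r x * (v' x * u x - u' x * v x) = 1) ∧
  Tendsto (fun x => v x / u x) atBot (nhds 0) ∧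
  Tendsto (fun x => u x / v x) atTop (nhds 0) ∧
  (∫⁻ t in Iic (0 : ℝ), ENNReal.ofReal (r t * (v t) ^ 2)⁻¹) = ⊤ ∧
  (∫⁻ t in Ici (0 : ℝ), ENNReal.ofReal (r t * (u t) ^ 2)⁻¹) = ⊤ ∧
  (∫⁻ t in Ici (0 : ℝ), ENNReal.ofReal (r t * (v t) ^ 2)⁻¹) < ⊤ ∧
  (∫⁻ t in Iic (0 : ℝ), ENNReal.ofReal (r t * (u t) ^ 2)⁻¹) < ⊤

/-- The Green function `G(x,t)` of (1.12). -/
def greenK (u v : ℝ → ℝ) (x t : ℝ) : ℝ := if t ≤ x then u x * v t else u t * v x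

/-- `(G₁ f)(x) = u(x) ∫_{-∞}^x v f`. -/
def G1op (u v f : ℝ → ℝ) (x : ℝ) : ℝ := u x * ∫ t in Iic x, v t * f t

/-- `(G₂ f)(x) = v(x) ∫_x^∞ u f`. -/
def G2op (u v f : ℝ → ℝ) (x : ℝ) : ℝ := v x * ∫ t in Ici x, u t * f t

/-- The Green integral operator `(G f)(x) = ∫_ℝ G(x,t) f(t) dt`. -/
def greenOp (u v f : ℝ → ℝ) (x : ℝ) : ℝ := G1op u v f x + G2op u v f x

/-- The operator norm of a map `T` acting on `L_p(ℝ)`: the least constant `C` such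
that `‖T f‖_p ≤ C ‖f‖_p` for all `f ∈ L_p`. -/
def opNormLp (T : (ℝ → ℝ) → ℝ → ℝ) (p : ℝ) : ℝ≥0∞ :=
  sInf {C : ℝ≥0∞ | ∀ f : ℝ → ℝ, MemLP f p → lpNorm (T f) p ≤ C * lpNorm f p}

/-- The Green operator is bounded as an operator from `L_p(ℝ)` to `L_p(ℝ)`:
it is well defined on `L_p` (the defining integrals converge), maps into `L_p`,
and its operator norm is finite. -/
def GreenBounded (u v : ℝ → ℝ) (p : ℝ) : Prop :=
  (∀ f : ℝ → ℝ, MemLP f p →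
    (∀ x : ℝ, IntegrableOn (fun t => v t * f t) (Iic x) volume ∧
              IntegrableOn (fun t => u t * f t) (Ici x) volume) ∧
    MemLP (greenOp u v f) p) ∧
  opNormLp (greenOp u v) p < ⊤

/-- `F₁(x,d) = (∫_{x-d}^x dt/r)·(∫_{x-d}^x q dt)`. -/
def F1 (r q : ℝ → ℝ) (x d : ℝ) : ℝ :=
  (∫ t in (x - d)..x, (r t)⁻¹) * ∫ t in (x - d)..x, q t

/-- `F₂(x,d) = (∫_x^{x+d} dt/r)·(∫_x^{x+d} q dt)`. -/
def F2 (r q : ℝ → ℝ) (x d : ℝ) : ℝ :=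
  (∫ t in x..(x + d), (r t)⁻¹) * ∫ t in x..(x + d), q t

/-- `φ(x) = ∫_{x-d₁(x)}^x dt/r(t)`. -/
def phiF (r d1 : ℝ → ℝ) (x : ℝ) : ℝ := ∫ t in (x - d1 x)..x, (r t)⁻¹

/-- `ψ(x) = ∫_x^{x+d₂(x)} dt/r(t)`. -/
def psiF (r d2 : ℝ → ℝ) (x : ℝ) : ℝ := ∫ t in x..(x + d2 x), (r t)⁻¹

/-- `h(x) = φ(x)ψ(x)/(φ(x)+ψ(x))`. -/
def hF (r d1 d2 : ℝ → ℝ) (x : ℝ) : ℝ :=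
  phiF r d1 x * psiF r d2 x / (phiF r d1 x + psiF r d2 x)

/-- `d₁` solves the first equation of (1.15). -/
def IsD1 (r q d1 : ℝ → ℝ) : Prop := ∀ x : ℝ, 0 < d1 x ∧ F1 r q x (d1 x) = 1

/-- `d₂` solves the second equation of (1.15). -/
def IsD2 (r q d2 : ℝ → ℝ) : Prop := ∀ x : ℝ, 0 < d2 x ∧ F2 r q x (d2 x) = 1

/-- `d` solves equation (1.18): `∫_{x-d(x)}^{x+d(x)} dt/(r(t)h(t)) = 1`. -/
def IsD (r h d : ℝ → ℝ) : Prop :=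
  ∀ x : ℝ, 0 < d x ∧ (∫ t in (x - d x)..(x + d x), (r t * h t)⁻¹) = 1

/-- The Hardy-type operator `(𝒦 f)(t) = μ(t) ∫_t^∞ θ(ξ) f(ξ) dξ`. -/
def hardyOp (μ θ f : ℝ → ℝ) (t : ℝ) : ℝ := μ t * ∫ ξ in Ici t, θ ξ * f ξ

/-- `H_p = sup_x (∫_{-∞}^x μ^p)^{1/p} (∫_x^∞ θ^{p'})^{1/p'}` with `p' = p/(p-1)`. -/
def HardyHp (μ θ : ℝ → ℝ) (p : ℝ) : ℝ≥0∞ :=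
  ⨆ x : ℝ, (∫⁻ t in Iic x, ENNReal.ofReal (μ t ^ p)) ^ (1 / p) *
           (∫⁻ t in Ici x, ENNReal.ofReal (θ t ^ (p / (p - 1)))) ^ (1 - 1 / p)

/-! With `ρ = u v` we have `(log ρ)' = v'/v + u'/u` and `v'/v ≥ 0 ≥ u'/u`. Since
`(r v')' = q v ≥ 0`, the flux `r v'` is nondecreasing on `[x - d₁(x), x]`: its value at the left end
point times `φ(x)` is at most `v(x)`, and its increment up to `x` is at most `v(x) ∫ q = v(x)/φ(x)`,
so `r v' φ ≤ 2 v` at `x`. The reflection `t ↦ -t` exchanges `v, d₁` with `u, d₂` and gives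
`r (-u') ψ ≤ 2 u`. As `1/φ + 1/ψ = 1/h`, `|(log ρ)'| ≤ 2/(r h)`, whose integral over
`[x - d(x), x + d(x)]` is `2`. The fundamental theorem of calculus applies to `log ρ` because
`log ∘ u` and `log ∘ v` are absolutely continuous. -/

open scoped NNReal Topology Interval

theorem LipschitzOnWith.comp_absolutelyContinuousOnInterval {X Y : Type*} [PseudoMetricSpace X]
    [PseudoMetricSpace Y] {f : ℝ → X} {φ : X → Y} {K : ℝ≥0} {s : Set X} {a b : ℝ}
    (hφ : LipschitzOnWith K φ s) (hf : AbsolutelyContinuousOnInterval f a b)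
    (hfs : MapsTo f (uIcc a b) s) :
    AbsolutelyContinuousOnInterval (φ ∘ f) a b := by
  have hK := Filter.Tendsto.const_mul (K : ℝ) (show Tendsto _ _ (𝓝 0) from hf)
  rw [mul_zero] at hK
  refine squeeze_zero' (Eventually.of_forall fun _ => Finset.sum_nonneg fun _ _ => dist_nonneg)
    ?_ hK
  filter_upwards [mem_inf_of_right (mem_principal_self _)] with E hE
  rw [Finset.mul_sum]
  exact Finset.sum_le_sum fun i hi =>
    hφ.dist_le_mul _ (hfs (hE.1 i hi).1) _ (hfs (hE.1 i hi).2)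

theorem Real.log_sub_log_le_inv_mul_abs_sub {m x y : ℝ} (hm : 0 < m) (hx : m ≤ x) (hy : m ≤ y) :
    Real.log x - Real.log y ≤ m⁻¹ * |x - y| := by
  have hy₀ : 0 < y := hm.trans_le hy
  calc Real.log x - Real.log y = Real.log (x / y) :=
        (Real.log_div (hm.trans_le hx).ne' hy₀.ne').symm
    _ ≤ x / y - 1 := Real.log_le_sub_one_of_pos (div_pos (hm.trans_le hx) hy₀)
    _ = (x - y) / y := by field_simp
    _ ≤ |x - y| / m := div_le_div₀ (abs_nonneg _) (le_abs_self _) hm hy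
    _ = m⁻¹ * |x - y| := by ring

theorem Real.lipschitzOnWith_log_Ici {m : ℝ} (hm : 0 < m) :
    LipschitzOnWith (Real.toNNReal m⁻¹) Real.log (Ici m) := by
  refine LipschitzOnWith.of_dist_le_mul fun x hx y hy => ?_
  rw [Real.coe_toNNReal _ (inv_nonneg.2 hm.le), Real.dist_eq, Real.dist_eq, abs_le]
  constructor
  · have h := Real.log_sub_log_le_inv_mul_abs_sub hm hy hx
    rw [abs_sub_comm] at h
    linarith
  · exact Real.log_sub_log_le_inv_mul_abs_sub hm hx hy

section LogDeriv

variable {g g' : ℝ → ℝ} {a b : ℝ}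

theorem absolutelyContinuousOnInterval_of_primitive (hg' : IntervalIntegrable g' volume a b)
    (hg : ∀ x, g x = g a + ∫ t in a..x, g' t) : AbsolutelyContinuousOnInterval g a b := by
  rw [show g = fun x => g a + ∫ t in a..x, g' t from funext hg]
  exact (LipschitzWith.const (g a)).lipschitzOnWith.absolutelyContinuousOnInterval.fun_add
    (hg'.absolutelyContinuousOnInterval_intervalIntegral left_mem_uIcc)

theorem absolutelyContinuousOnInterval_log_of_primitive (hg' : IntervalIntegrable g' volume a b)
    (hg : ∀ x, g x = g a + ∫ t in a..x, g' t) (hpos : ∀ x ∈ uIcc a b, 0 < g x) :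
    AbsolutelyContinuousOnInterval (fun x => Real.log (g x)) a b := by
  have hAC := absolutelyContinuousOnInterval_of_primitive hg' hg
  obtain ⟨c, hc, hmin⟩ := isCompact_uIcc.exists_isMinOn nonempty_uIcc hAC.continuousOn
  exact (Real.lipschitzOnWith_log_Ici (hpos c hc)).comp_absolutelyContinuousOnInterval hAC
    fun x hx => hmin hx

theorem ae_hasDerivAt_log_of_primitive (hg' : IntervalIntegrable g' volume a b)
    (hg : ∀ x, g x = g a + ∫ t in a..x, g' t) (hpos : ∀ x ∈ uIcc a b, 0 < g x) :
    ∀ᵐ x, x ∈ uIcc a b → HasDerivAt (fun x => Real.log (g x)) (g' x / g x) x := by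
  filter_upwards [hg'.ae_hasDerivAt_integral] with x hx hxab
  rw [show g = fun x => g a + ∫ t in a..x, g' t from funext hg] at hpos ⊢
  exact ((hx hxab a left_mem_uIcc).const_add (g a)).log (hpos x hxab).ne'

theorem intervalIntegrable_div_of_primitive (hg' : IntervalIntegrable g' volume a b)
    (hg : ∀ x, g x = g a + ∫ t in a..x, g' t) (hpos : ∀ x ∈ uIcc a b, 0 < g x) :
    IntervalIntegrable (fun x => g' x / g x) volume a b := by
  refine (absolutelyContinuousOnInterval_log_of_primitive hg' hg hpos).intervalIntegrable_deriv
    |>.congr_ae ((ae_restrict_iff' measurableSet_uIoc).2 ?_)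
  filter_upwards [ae_hasDerivAt_log_of_primitive hg' hg hpos] with x hx hxab
  exact (hx (uIoc_subset_uIcc hxab)).deriv

theorem log_sub_log_eq_integral_div (hg' : IntervalIntegrable g' volume a b)
    (hg : ∀ x, g x = g a + ∫ t in a..x, g' t) (hpos : ∀ x ∈ uIcc a b, 0 < g x) :
    Real.log (g b) - Real.log (g a) = ∫ x in a..b, g' x / g x := by
  rw [← (absolutelyContinuousOnInterval_log_of_primitive hg' hg hpos).integral_deriv_eq_sub]
  refine intervalIntegral.integral_congr_ae ?_
  filter_upwards [ae_hasDerivAt_log_of_primitive hg' hg hpos] with x hx hxab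
  exact (hx (uIoc_subset_uIcc hxab)).deriv

end LogDeriv

namespace IsSolutionWith

variable {r q f y y' : ℝ → ℝ}

theorem sub_eq_integral (h : IsSolutionWith r q f y y') (s t : ℝ) :
    y t - y s = ∫ τ in s..t, y' τ := by
  rw [h.2.1 t, h.2.1 s, ← intervalIntegral.integral_interval_sub_left (h.1 0 t) (h.1 0 s)]
  ring

theorem flux_sub_eq_integral (h : IsSolutionWith r q f y y') (s t : ℝ) :
    r t * y' t - r s * y' s = ∫ τ in s..t, (q τ * y τ - f τ) := by
  rw [h.2.2.2 t, h.2.2.2 s,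
    ← intervalIntegral.integral_interval_sub_left (h.2.2.1 0 t) (h.2.2.1 0 s)]
  ring

theorem comp_neg (h : IsSolutionWith r q f y y') :
    IsSolutionWith (fun t => r (-t)) (fun t => q (-t)) (fun t => f (-t)) (fun t => y (-t))
      (fun t => -y' (-t)) := by
  refine ⟨fun a b => ?_, fun x => ?_, fun a b => ?_, fun x => ?_⟩
  · simpa using (h.1 (-a) (-b)).neg.comp_sub_left 0
  · rw [intervalIntegral.integral_neg, intervalIntegral.integral_comp_neg,
      intervalIntegral.integral_symm, neg_zero, neg_neg, ← h.sub_eq_integral]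
    simp only [neg_zero]
    ring
  · simpa using (h.2.2.1 (-a) (-b)).comp_sub_left 0
  · rw [intervalIntegral.integral_comp_neg (fun t => q t * y t - f t),
      intervalIntegral.integral_symm, neg_zero, ← h.flux_sub_eq_integral]
    simp only [neg_zero]
    ring

end IsSolutionWith

theorem F1_comp_neg (r q : ℝ → ℝ) (x δ : ℝ) :
    F1 (fun t => r (-t)) (fun t => q (-t)) (-x) δ = F2 r q x δ := by
  simp only [F1, F2, intervalIntegral.integral_comp_neg (fun t => (r t)⁻¹),
    intervalIntegral.integral_comp_neg q, neg_neg, neg_sub, sub_neg_eq_add, add_comm δ x]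

namespace IsSolutionHom

variable {r q z z' : ℝ → ℝ} {x δ : ℝ}

theorem flux_mul_integral_inv_le (hz : IsSolutionHom r q z z') (hr : ∀ t, 0 < r t)
    (hq : ∀ t, 0 ≤ q t) (hz_nonneg : ∀ t, 0 ≤ z t) (hz' : ∀ t, 0 ≤ z' t) (hδ : 0 ≤ δ)
    (hr_int : IntervalIntegrable (fun t => (r t)⁻¹) volume (x - δ) x)
    (hq_int : IntervalIntegrable q volume (x - δ) x) (hF : F1 r q x δ = 1) :
    r x * z' x * ∫ t in (x - δ)..x, (r t)⁻¹ ≤ 2 * z x := by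
  set a := x - δ
  set A := ∫ t in a..x, (r t)⁻¹
  set Q := ∫ t in a..x, q t
  have hax : a ≤ x := sub_le_self x hδ
  have hA : 0 ≤ A := intervalIntegral.integral_nonneg hax fun t _ => (inv_pos.2 (hr t)).le
  have hqz : ∀ s t, r t * z' t - r s * z' s = ∫ τ in s..t, q τ * z τ := by
    simpa using hz.flux_sub_eq_integral
  have hz_mono : ∀ t ≤ x, z t ≤ z x := fun t ht => by
    linarith [hz.sub_eq_integral t x,
      intervalIntegral.integral_nonneg (μ := volume) ht fun τ _ => hz' τ]
  have hflux_mono : ∀ t, a ≤ t → r a * z' a ≤ r t * z' t := fun t ht => by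
    linarith [hqz a t,
      intervalIntegral.integral_nonneg (μ := volume) ht fun τ _ => mul_nonneg (hq τ) (hz_nonneg τ)]
  have h_left : r a * z' a * A ≤ z x :=
    calc r a * z' a * A = ∫ t in a..x, r a * z' a * (r t)⁻¹ :=
          (intervalIntegral.integral_const_mul _ _).symm
      _ ≤ ∫ t in a..x, z' t := by
          refine intervalIntegral.integral_mono_on hax (hr_int.const_mul _) (hz.1 a x)
            fun t ht => ?_
          calc r a * z' a * (r t)⁻¹ ≤ r t * z' t * (r t)⁻¹ :=
                mul_le_mul_of_nonneg_right (hflux_mono t ht.1) (inv_pos.2 (hr t)).le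
            _ = z' t := by rw [mul_comm (r t), mul_inv_cancel_right₀ (hr t).ne']
      _ = z x - z a := (hz.sub_eq_integral a x).symm
      _ ≤ z x := sub_le_self _ (hz_nonneg a)
  have h_right : r x * z' x - r a * z' a ≤ z x * Q :=
    calc r x * z' x - r a * z' a = ∫ t in a..x, q t * z t := hqz a x
      _ ≤ ∫ t in a..x, q t * z x := by
          refine intervalIntegral.integral_mono_on hax (by simpa using hz.2.2.1 a x)
            (hq_int.mul_const _) fun t ht => ?_
          exact mul_le_mul_of_nonneg_left (hz_mono t ht.2) (hq t)
      _ = z x * Q := by rw [intervalIntegral.integral_mul_const, mul_comm]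
  have hAQ : A * Q = 1 := hF
  calc r x * z' x * A = (r x * z' x - r a * z' a) * A + r a * z' a * A := by ring
    _ ≤ z x * Q * A + z x := add_le_add (mul_le_mul_of_nonneg_right h_right hA) h_left
    _ = 2 * z x := by rw [mul_assoc, mul_comm Q, hAQ]; ring

theorem neg_flux_mul_integral_inv_le (hz : IsSolutionHom r q z z') (hr : ∀ t, 0 < r t)
    (hq : ∀ t, 0 ≤ q t) (hz_nonneg : ∀ t, 0 ≤ z t) (hz' : ∀ t, z' t ≤ 0) (hδ : 0 ≤ δ)
    (hr_int : IntervalIntegrable (fun t => (r t)⁻¹) volume x (x + δ))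
    (hq_int : IntervalIntegrable q volume x (x + δ)) (hF : F2 r q x δ = 1) :
    r x * -z' x * ∫ t in x..(x + δ), (r t)⁻¹ ≤ 2 * z x := by
  have h := flux_mul_integral_inv_le (x := -x) hz.comp_neg (fun t => hr (-t)) (fun t => hq (-t))
    (fun t => hz_nonneg (-t)) (fun t => neg_nonneg.2 (hz' (-t))) hδ
    (by simpa [sub_eq_add_neg, add_comm] using (hr_int.comp_sub_left 0).symm)
    (by simpa [sub_eq_add_neg, add_comm] using (hq_int.comp_sub_left 0).symm)
    ((F1_comp_neg r q x δ).trans hF)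
  simpa [intervalIntegral.integral_comp_neg (fun t => (r t)⁻¹), add_comm δ x] using h

end IsSolutionHom

theorem exp_neg_mul_le_and_le_exp_mul_of_abs_log_sub_le {a b c : ℝ} (ha : 0 < a) (hb : 0 < b)
    (h : |Real.log b - Real.log a| ≤ c) :
    Real.exp (-c) * a ≤ b ∧ b ≤ Real.exp c * a := by
  rw [abs_le] at h
  rw [← Real.exp_log ha, ← Real.exp_log hb, ← Real.exp_add, ← Real.exp_add, Real.exp_le_exp,
    Real.exp_le_exp]
  constructor <;> linarith

theorem abs_intervalIntegral_le_of_mem_Icc {k w : ℝ → ℝ} {a b x t : ℝ} (hab : a ≤ b)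
    (hx : x ∈ Icc a b) (ht : t ∈ Icc a b) (hw : IntervalIntegrable w volume a b)
    (hkw : ∀ ξ, |k ξ| ≤ w ξ) :
    |∫ ξ in x..t, k ξ| ≤ ∫ ξ in a..b, w ξ := by
  have hw_nonneg : ∀ ξ, 0 ≤ w ξ := fun ξ => (abs_nonneg _).trans (hkw ξ)
  have hw' : IntegrableOn w (Ι a b) volume := hw.def'
  have hsub : Ι x t ⊆ Ι a b := uIoc_subset_uIoc_of_uIcc_subset_uIcc
    (uIcc_subset_uIcc (Icc_subset_uIcc hx) (Icc_subset_uIcc ht))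
  calc |∫ ξ in x..t, k ξ| ≤ ∫ ξ in Ι x t, |k ξ| := by
        simpa only [Real.norm_eq_abs] using
          intervalIntegral.norm_integral_le_integral_norm_uIoc (f := k) (μ := volume)
    _ ≤ ∫ ξ in Ι x t, w ξ :=
        integral_mono_of_nonneg (Eventually.of_forall fun ξ => abs_nonneg _)
          (hw'.mono_set hsub) (Eventually.of_forall hkw)
    _ ≤ ∫ ξ in Ι a b, w ξ :=
        setIntegral_mono_set hw' (Eventually.of_forall hw_nonneg) hsub.eventuallyLE
    _ = ∫ ξ in a..b, w ξ := by rw [intervalIntegral.integral_of_le hab, uIoc_of_le hab]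

namespace IsFSS

variable {r q u u' v v' d1 d2 : ℝ → ℝ}

theorem log_mul_sub_log_mul_eq_integral (hFSS : IsFSS r q u u' v v') (x t : ℝ) :
    Real.log (u t * v t) - Real.log (u x * v x) = ∫ ξ in x..t, (v' ξ / v ξ + u' ξ / u ξ) := by
  obtain ⟨hu, hv, hu_pos, hv_pos, -⟩ := hFSS
  have hu_prim : ∀ y, u y = u x + ∫ τ in x..y, u' τ := fun y => by
    linarith [hu.sub_eq_integral x y]
  have hv_prim : ∀ y, v y = v x + ∫ τ in x..y, v' τ := fun y => by
    linarith [hv.sub_eq_integral x y]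
  rw [Real.log_mul (hu_pos t).ne' (hv_pos t).ne', Real.log_mul (hu_pos x).ne' (hv_pos x).ne',
    intervalIntegral.integral_add
      (intervalIntegrable_div_of_primitive (hv.1 x t) hv_prim fun y _ => hv_pos y)
      (intervalIntegrable_div_of_primitive (hu.1 x t) hu_prim fun y _ => hu_pos y),
    ← log_sub_log_eq_integral_div (hv.1 x t) hv_prim fun y _ => hv_pos y,
    ← log_sub_log_eq_integral_div (hu.1 x t) hu_prim fun y _ => hu_pos y]
  ring

theorem abs_logDeriv_le (hFSS : IsFSS r q u u' v v') (h12 : Cond12 r q) (hd1 : IsD1 r q d1)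
    (hd2 : IsD2 r q d2) (x : ℝ) :
    |v' x / v x + u' x / u x| ≤ 2 * (r x * hF r d1 d2 x)⁻¹ := by
  obtain ⟨hr, hq, hr_loc, hq_loc⟩ := h12
  obtain ⟨hu, hv, hu_pos, hv_pos, hv', hu', -⟩ := hFSS
  have hr_int : ∀ a b, IntervalIntegrable (fun t => (r t)⁻¹) volume a b := fun a b =>
    (hr_loc.integrableOn_isCompact isCompact_uIcc).intervalIntegrable
  have hq_int : ∀ a b, IntervalIntegrable q volume a b := fun a b =>
    (hq_loc.integrableOn_isCompact isCompact_uIcc).intervalIntegrable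
  obtain ⟨hd1_pos, hF1⟩ := hd1 x
  obtain ⟨hd2_pos, hF2⟩ := hd2 x
  have hφ : 0 < phiF r d1 x := intervalIntegral.intervalIntegral_pos_of_pos_on (hr_int _ _)
    (fun t _ => inv_pos.2 (hr t)) (sub_lt_self x hd1_pos)
  have hψ : 0 < psiF r d2 x := intervalIntegral.intervalIntegral_pos_of_pos_on (hr_int _ _)
    (fun t _ => inv_pos.2 (hr t)) (lt_add_of_pos_right x hd2_pos)
  have hv_le : v' x / v x ≤ 2 / (r x * phiF r d1 x) := by
    have h : r x * v' x * phiF r d1 x ≤ 2 * v x := hv.flux_mul_integral_inv_le hr hq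
      (fun t => (hv_pos t).le) hv' hd1_pos.le (hr_int _ _) (hq_int _ _) hF1
    rw [div_le_div_iff₀ (hv_pos x) (mul_pos (hr x) hφ)]
    linarith
  have hu_le : -u' x / u x ≤ 2 / (r x * psiF r d2 x) := by
    have h : r x * -u' x * psiF r d2 x ≤ 2 * u x := hu.neg_flux_mul_integral_inv_le hr hq
      (fun t => (hu_pos t).le) hu' hd2_pos.le (hr_int _ _) (hq_int _ _) hF2
    rw [div_le_div_iff₀ (hu_pos x) (mul_pos (hr x) hψ)]
    linarith
  have h_sum : 2 / (r x * phiF r d1 x) + 2 / (r x * psiF r d2 x) = 2 * (r x * hF r d1 d2 x)⁻¹ := by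
    unfold hF
    field_simp
    ring
  have hv_nonneg : 0 ≤ v' x / v x := div_nonneg (hv' x) (hv_pos x).le
  have hu_nonpos : u' x / u x ≤ 0 := div_nonpos_of_nonpos_of_nonneg (hu' x) (hu_pos x).le
  rw [neg_div] at hu_le
  rw [abs_le]
  constructor <;> linarith

end IsFSS

theorem stmt_13_general (r q u u' v v' d1 d2 d : ℝ → ℝ) (h12 : Cond12 r q)
    (hFSS : IsFSS r q u u' v v') (hd1 : IsD1 r q d1) (hd2 : IsD2 r q d2)
    (hd : IsD r (hF r d1 d2) d) :
    ∀ x t : ℝ, t ∈ Icc (x - d x) (x + d x) →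
      Real.exp (-2) * (u x * v x) ≤ u t * v t ∧
      u t * v t ≤ Real.exp 2 * (u x * v x) := by
  intro x t ht
  obtain ⟨hd_pos, hd_int⟩ := hd x
  have hx : x ∈ Icc (x - d x) (x + d x) :=
    ⟨sub_le_self x hd_pos.le, le_add_of_nonneg_right hd_pos.le⟩
  have hw : IntervalIntegrable (fun ξ => 2 * (r ξ * hF r d1 d2 ξ)⁻¹) volume (x - d x) (x + d x) :=
    (intervalIntegral.intervalIntegrable_of_integral_ne_zero (hd_int ▸ one_ne_zero)).const_mul 2
  have hlog : |Real.log (u t * v t) - Real.log (u x * v x)| ≤ 2 := by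
    rw [hFSS.log_mul_sub_log_mul_eq_integral x t]
    calc _ ≤ ∫ ξ in (x - d x)..(x + d x), 2 * (r ξ * hF r d1 d2 ξ)⁻¹ :=
          abs_intervalIntegral_le_of_mem_Icc (hx.1.trans hx.2) hx ht hw
            (hFSS.abs_logDeriv_le h12 hd1 hd2)
      _ = 2 := by rw [intervalIntegral.integral_const_mul, hd_int, mul_one]
  obtain ⟨-, -, hu_pos, hv_pos, -⟩ := hFSS
  exact exp_neg_mul_le_and_le_exp_mul_of_abs_log_sub_le (mul_pos (hu_pos x) (hv_pos x))
    (mul_pos (hu_pos t) (hv_pos t)) hlog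

/-- Lemma 2.8: under (1.2) and (1.6), for all `x ∈ ℝ` and
`t ∈ [x - d(x), x + d(x)]`: `e⁻² ρ(x) ≤ ρ(t) ≤ e² ρ(x)` where `ρ = u·v`. -/
theorem stmt_13 (r q u u' v v' d1 d2 d : ℝ → ℝ) (h12 : Cond12 r q) (h16 : Cond16 r q)
    (hFSS : IsFSS r q u u' v v') (hd1 : IsD1 r q d1) (hd2 : IsD2 r q d2)
    (hd : IsD r (hF r d1 d2) d) :
    ∀ x t : ℝ, t ∈ Icc (x - d x) (x + d x) →
      Real.exp (-2) * (u x * v x) ≤ u t * v t ∧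
      u t * v t ≤ Real.exp 2 * (u x * v x) :=
  stmt_13_general r q u u' v v' d1 d2 d h12 hFSS hd1 hd2 hd

end
end

section
/- Suppose conditions (1.2) and (1.6) hold. Then for every x ∈ ℝ there exists an ℝ(x)-covering of ℝ: a family of points (x_n)_{n∈ℤ\{0}} such that the segments Δ_n = [x_n − d(x_n), x_n + d(x_n)] satisfy: Δ_{n+1}⁻ = Δ_n⁺ for n ≥ 1, Δ_{n-1}⁺ = Δ_n⁻ for n ≤ −1, Δ₁⁻ = Δ₋₁⁺ = x, and ⋃_{n≠0} Δ_n = ℝ (where Δ_n⁻ = x_n − d(x_n) and Δ_n⁺ = x_n + d(x_n)). -/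
open MeasureTheory Set Filter
open scoped ENNReal

noncomputable section

/-!
Put `g = 1/(r h) = (1/r)(1/φ + 1/ψ)` and let `W` be a primitive of `g`. By (1.18) every segment
`[c - d(c), c + d(c)]` has `W`-length exactly `1`, and since `W` is strictly increasing this
characterises `d(c)`. So once `W` is shown to be a bijection of `ℝ`, the covering is obtained by
pulling back the unit segments `[W(x) + k, W(x) + k + 1]`, `k ∈ ℤ`.

`W` is unbounded because `g` dominates `(1/r)/φ` and `(1/r)/ψ`, where the windows `[t - d₁(t), t]`
and `[t, t + d₂(t)]` move monotonically with `t` (otherwise a strictly larger window would carry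
the same product `1` in (1.15)). Starting from `a`, either `∫_a^b dt/r` eventually exceeds `φ(a)`,
and then `φ ≤ 2 ∫_a^b dt/r` on `[a, b]`, or `∫_a^∞ dt/r` is finite, and then it bounds `ψ` on
`[a, ∞)`; either way `W` grows by `1/2` on some `[a, b]`. Unboundedness below follows by the
reflection `t ↦ -t`, which swaps the two windows.
-/

open intervalIntegral

theorem MeasureTheory.LocallyIntegrable.intervalIntegrable {f : ℝ → ℝ}
    (hf : LocallyIntegrable f volume) (a b : ℝ) : IntervalIntegrable f volume a b :=
  (hf.integrableOn_isCompact isCompact_uIcc).intervalIntegrable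

theorem locallyIntegrable_of_integral_ne_zero {f δ : ℝ → ℝ} (hδ : ∀ x, 0 < δ x)
    (hf : ∀ x, ∫ t in (x - δ x)..(x + δ x), f t ≠ 0) : LocallyIntegrable f volume := by
  intro x
  have hint : IntervalIntegrable f volume (x - δ x) (x + δ x) := by
    by_contra h
    exact hf x (integral_undef h)
  have hx := hδ x
  exact ⟨Ioc (x - δ x) (x + δ x), Ioc_mem_nhds (by linarith) (by linarith), hint.1⟩

theorem strictMono_primitive {f : ℝ → ℝ} (hf : ∀ t, 0 < f t)
    (hfi : ∀ a b, IntervalIntegrable f volume a b) (a : ℝ) :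
    StrictMono fun b => ∫ t in a..b, f t := by
  intro s t hst
  have hpos : 0 < ∫ u in s..t, f u := intervalIntegral_pos_of_pos_on (hfi s t) (fun u _ => hf u) hst
  have hsplit := integral_add_adjacent_intervals (hfi a s) (hfi s t)
  simp only
  linarith

section NestedIntervals

variable {w q : ℝ → ℝ} {a a' b' b : ℝ}

theorem integral_lt_integral_of_Icc_ssubset (hw : ∀ t, 0 < w t)
    (hwi : ∀ a b, IntervalIntegrable w volume a b) (ha : a ≤ a') (hb : b' ≤ b)
    (hne : a < a' ∨ b' < b) : ∫ t in a'..b', w t < ∫ t in a..b, w t := by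
  rw [← integral_add_adjacent_intervals (hwi a a') (hwi a' b),
    ← integral_add_adjacent_intervals (hwi a' b') (hwi b' b)]
  have hleft : 0 ≤ ∫ t in a..a', w t := integral_nonneg ha fun t _ => (hw t).le
  have hright : 0 ≤ ∫ t in b'..b, w t := integral_nonneg hb fun t _ => (hw t).le
  rcases hne with h | h
  · linarith [intervalIntegral_pos_of_pos_on (hwi a a') (fun t _ => hw t) h]
  · linarith [intervalIntegral_pos_of_pos_on (hwi b' b) (fun t _ => hw t) h]

theorem mul_integral_lt_of_Icc_ssubset (hw : ∀ t, 0 < w t)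
    (hwi : ∀ a b, IntervalIntegrable w volume a b) (hq : ∀ t, 0 ≤ q t)
    (hqi : ∀ a b, IntervalIntegrable q volume a b) (ha : a ≤ a') (hab : a' ≤ b') (hb : b' ≤ b)
    (hne : a < a' ∨ b' < b) (hpos : 0 < ∫ t in a'..b', q t) :
    (∫ t in a'..b', w t) * (∫ t in a'..b', q t) < (∫ t in a..b, w t) * ∫ t in a..b, q t :=
  mul_lt_mul (integral_lt_integral_of_Icc_ssubset hw hwi ha hb hne)
    (integral_mono_interval ha hab hb (ae_of_all _ hq) (hqi a b)) hpos
    (integral_nonneg (ha.trans (hab.trans hb)) fun t _ => (hw t).le)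

end NestedIntervals

section Windows

variable {r q d1 d2 : ℝ → ℝ}

theorem pos_of_mul_eq_one_of_nonneg {A B : ℝ} (hB : 0 ≤ B) (h : A * B = 1) : 0 < B :=
  hB.lt_of_ne fun h0 => by simp [← h0] at h

theorem monotone_sub_of_isD1 (h12 : Cond12 r q) (hd1 : IsD1 r q d1) :
    Monotone fun x => x - d1 x := by
  obtain ⟨hr, hq, hir, hqi⟩ := h12
  intro x y hxy
  by_contra! hlt
  have hxy' : x < y := hxy.lt_of_ne (by rintro rfl; exact lt_irrefl _ hlt)
  have hx := hd1 x
  have hy := hd1 y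
  unfold F1 at hx hy
  have hq_pos := pos_of_mul_eq_one_of_nonneg
    (integral_nonneg (by linarith) fun t _ => hq t) hx.2
  have := mul_integral_lt_of_Icc_ssubset (fun t => inv_pos.2 (hr t)) hir.intervalIntegrable hq
    hqi.intervalIntegrable hlt.le (by linarith) hxy (Or.inr hxy') hq_pos
  linarith

theorem monotone_add_of_isD2 (h12 : Cond12 r q) (hd2 : IsD2 r q d2) :
    Monotone fun x => x + d2 x := by
  obtain ⟨hr, hq, hir, hqi⟩ := h12
  intro x y hxy
  by_contra! hlt
  have hxy' : x < y := hxy.lt_of_ne (by rintro rfl; exact lt_irrefl _ hlt)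
  have hx := hd2 x
  have hy := hd2 y
  unfold F2 at hx hy
  have hq_pos := pos_of_mul_eq_one_of_nonneg
    (integral_nonneg (by linarith) fun t _ => hq t) hy.2
  have := mul_integral_lt_of_Icc_ssubset (fun t => inv_pos.2 (hr t)) hir.intervalIntegrable hq
    hqi.intervalIntegrable hxy (by linarith) hlt.le (Or.inl hxy') hq_pos
  linarith

end Windows

/-- Modelled on `w = 1/r`, `g = 1/(r h)`, `lo t = t - d₁(t)`, `hi t = t + d₂(t)`. -/
structure IsWindowMajorant (w g lo hi : ℝ → ℝ) : Prop where
  pos : ∀ t, 0 < w t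
  intervalIntegrable : ∀ a b, IntervalIntegrable w volume a b
  intervalIntegrable_majorant : ∀ a b, IntervalIntegrable g volume a b
  monotone_lo : Monotone lo
  monotone_hi : Monotone hi
  lo_lt : ∀ t, lo t < t
  lt_hi : ∀ t, t < hi t
  div_integral_lo_le : ∀ t, w t / (∫ s in lo t..t, w s) ≤ g t
  div_integral_hi_le : ∀ t, w t / (∫ s in t..hi t, w s) ≤ g t

theorem integral_div_le_integral {w g win : ℝ → ℝ} {a b C : ℝ} (hab : a ≤ b)
    (hwi : IntervalIntegrable w volume a b) (hgi : IntervalIntegrable g volume a b)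
    (hw : ∀ t ∈ Icc a b, 0 ≤ w t) (hwin : ∀ t ∈ Icc a b, 0 < win t)
    (hwinC : ∀ t ∈ Icc a b, win t ≤ C) (hg : ∀ t ∈ Icc a b, w t / win t ≤ g t) :
    (∫ t in a..b, w t) / C ≤ ∫ t in a..b, g t := by
  rw [← intervalIntegral.integral_div]
  refine integral_mono_on hab (hwi.div_const C) hgi fun t ht => ?_
  exact (div_le_div_of_nonneg_left (hw t ht) (hwin t ht) (hwinC t ht)).trans (hg t ht)

namespace IsWindowMajorant

variable {w g lo hi : ℝ → ℝ}

theorem integral_lo_pos (H : IsWindowMajorant w g lo hi) (t : ℝ) : 0 < ∫ s in lo t..t, w s :=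
  intervalIntegral_pos_of_pos_on (H.intervalIntegrable _ _) (fun s _ => H.pos s) (H.lo_lt t)

theorem integral_hi_pos (H : IsWindowMajorant w g lo hi) (t : ℝ) : 0 < ∫ s in t..hi t, w s :=
  intervalIntegral_pos_of_pos_on (H.intervalIntegrable _ _) (fun s _ => H.pos s) (H.lt_hi t)

theorem majorant_pos (H : IsWindowMajorant w g lo hi) (t : ℝ) : 0 < g t :=
  (div_pos (H.pos t) (H.integral_lo_pos t)).trans_le (H.div_integral_lo_le t)

theorem exists_half_le_integral (H : IsWindowMajorant w g lo hi) (a : ℝ) :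
    ∃ b, a < b ∧ 1 / 2 ≤ ∫ t in a..b, g t := by
  set Q : ℝ → ℝ := fun b => ∫ t in a..b, w t
  have hQ_mono : StrictMono Q := strictMono_primitive H.pos H.intervalIntegrable a
  have hQa : Q a = 0 := integral_same
  have lt_of_Q_pos : ∀ b, 0 < Q b → a < b := fun b hb => hQ_mono.lt_iff_lt.mp (hQa ▸ hb)
  by_cases hcase : ∃ b, (∫ s in lo a..a, w s) ≤ Q b
  · -- the left window of every `t ∈ [a, b]` lies in `[lo a, b]`
    obtain ⟨b, hb⟩ := hcase
    have hab : a < b := lt_of_Q_pos b ((H.integral_lo_pos a).trans_le hb)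
    have hsplit : (∫ s in lo a..a, w s) + Q b = ∫ s in lo a..b, w s :=
      integral_add_adjacent_intervals (H.intervalIntegrable _ _) (H.intervalIntegrable _ _)
    have hbound := integral_div_le_integral hab.le (H.intervalIntegrable a b)
      (H.intervalIntegrable_majorant a b) (fun t _ => (H.pos t).le)
      (fun t _ => H.integral_lo_pos t)
      (fun t ht => integral_mono_interval (H.monotone_lo ht.1) (H.lo_lt t).le ht.2
        (ae_of_all _ fun s => (H.pos s).le) (H.intervalIntegrable _ _))
      (fun t _ => H.div_integral_lo_le t)
    refine ⟨b, hab, le_trans ?_ hbound⟩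
    rw [le_div_iff₀ (by linarith [H.integral_lo_pos a])]
    linarith
  · -- `∫_a^∞ w` is finite and bounds every right window in `[a, ∞)`
    simp only [not_exists, not_le] at hcase
    have hbdd : BddAbove (range Q) := ⟨_, by rintro _ ⟨t, rfl⟩; exact (hcase t).le⟩
    have hM : 0 < sSup (range Q) :=
      (hQa ▸ hQ_mono (lt_add_one a)).trans_le (le_csSup hbdd (mem_range_self _))
    obtain ⟨_, ⟨b, rfl⟩, hb⟩ :=
      exists_lt_of_lt_csSup (range_nonempty Q) (half_lt_self hM)
    have hab : a < b := lt_of_Q_pos b ((half_pos hM).trans hb)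
    have hbound := integral_div_le_integral hab.le (H.intervalIntegrable a b)
      (H.intervalIntegrable_majorant a b) (fun t _ => (H.pos t).le)
      (fun t _ => H.integral_hi_pos t)
      (fun t ht => (integral_mono_interval ht.1 (H.lt_hi t).le le_rfl
        (ae_of_all _ fun s => (H.pos s).le) (H.intervalIntegrable _ _)).trans
          (le_csSup hbdd (mem_range_self (hi t))))
      (fun t _ => H.div_integral_hi_le t)
    refine ⟨b, hab, le_trans ?_ hbound⟩
    rw [le_div_iff₀ hM]
    linarith

theorem reflect (H : IsWindowMajorant w g lo hi) :
    IsWindowMajorant (fun t => w (-t)) (fun t => g (-t)) (fun t => -hi (-t)) (fun t => -lo (-t)) where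
  pos t := H.pos (-t)
  intervalIntegrable a b := by
    simpa using (IntervalIntegrable.iff_comp_neg).mp (H.intervalIntegrable (-a) (-b))
  intervalIntegrable_majorant a b := by
    simpa using (IntervalIntegrable.iff_comp_neg).mp (H.intervalIntegrable_majorant (-a) (-b))
  monotone_lo s t hst := neg_le_neg (H.monotone_hi (neg_le_neg hst))
  monotone_hi s t hst := neg_le_neg (H.monotone_lo (neg_le_neg hst))
  lo_lt t := by linarith [H.lt_hi (-t)]
  lt_hi t := by linarith [H.lo_lt (-t)]
  div_integral_lo_le t := by
    simpa [integral_comp_neg (fun s => w s)] using H.div_integral_hi_le (-t)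
  div_integral_hi_le t := by
    simpa [integral_comp_neg (fun s => w s)] using H.div_integral_lo_le (-t)

theorem strictMono_primitive (H : IsWindowMajorant w g lo hi) :
    StrictMono fun b => ∫ t in (0 : ℝ)..b, g t :=
  _root_.strictMono_primitive H.majorant_pos H.intervalIntegrable_majorant 0

theorem tendsto_primitive_atTop (H : IsWindowMajorant w g lo hi) :
    Tendsto (fun b => ∫ t in (0 : ℝ)..b, g t) atTop atTop := by
  have hgrow : ∀ n : ℕ, ∃ b, (n : ℝ) / 2 ≤ ∫ t in (0 : ℝ)..b, g t := by
    intro n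
    induction n with
    | zero => exact ⟨0, by simp⟩
    | succ n ih =>
      obtain ⟨a, ha⟩ := ih
      obtain ⟨b, -, hb⟩ := H.exists_half_le_integral a
      refine ⟨b, ?_⟩
      rw [← integral_add_adjacent_intervals (H.intervalIntegrable_majorant 0 a)
        (H.intervalIntegrable_majorant a b)]
      push_cast
      linarith
  refine tendsto_atTop_atTop_of_monotone H.strictMono_primitive.monotone fun M => ?_
  obtain ⟨n, hn⟩ := exists_nat_ge (2 * M)
  obtain ⟨b, hb⟩ := hgrow n
  exact ⟨b, by linarith⟩

theorem tendsto_primitive_atBot (H : IsWindowMajorant w g lo hi) :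
    Tendsto (fun b => ∫ t in (0 : ℝ)..b, g t) atBot atBot := by
  have hneg : (fun b => ∫ t in (0 : ℝ)..b, g t) = fun b => -∫ t in (0 : ℝ)..(-b), g (-t) := by
    ext b
    simp [integral_comp_neg (fun t => g t), integral_symm b 0]
  rw [hneg]
  exact tendsto_neg_atTop_atBot.comp (H.reflect.tendsto_primitive_atTop.comp tendsto_neg_atBot_atTop)

theorem surjective_primitive (H : IsWindowMajorant w g lo hi) :
    Function.Surjective fun b => ∫ t in (0 : ℝ)..b, g t :=
  (continuous_primitive H.intervalIntegrable_majorant 0).surjective H.tendsto_primitive_atTop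
    H.tendsto_primitive_atBot

end IsWindowMajorant

section Covering

variable {W d : ℝ → ℝ}

theorem radius_eq_of_sub_eq_one (hW : StrictMono W) (hd : ∀ c, W (c + d c) - W (c - d c) = 1)
    {a b : ℝ} (hab : W b - W a = 1) : d ((a + b) / 2) = (b - a) / 2 := by
  set c := (a + b) / 2
  have hwidth : StrictMono fun δ => W (c + δ) - W (c - δ) := fun δ δ' hδ => by
    have := hW (show c + δ < c + δ' by linarith)
    have := hW (show c - δ' < c - δ by linarith)
    simp only
    linarith
  refine hwidth.injective ?_
  simp only [hd c, show c + (b - a) / 2 = b by ring, show c - (b - a) / 2 = a by ring, hab]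

theorem exists_chain_covering (hW : StrictMono W) (hsurj : Function.Surjective W)
    (hd : ∀ c, W (c + d c) - W (c - d c) = 1) (x : ℝ) :
    ∃ c : ℤ → ℝ,
      (∀ n : ℤ, 1 ≤ n → c (n + 1) - d (c (n + 1)) = c n + d (c n)) ∧
      (∀ n : ℤ, n ≤ -1 → c (n - 1) + d (c (n - 1)) = c n - d (c n)) ∧
      c 1 - d (c 1) = x ∧ c (-1) + d (c (-1)) = x ∧
      (⋃ n ∈ {m : ℤ | m ≠ 0}, Icc (c n - d (c n)) (c n + d (c n))) = univ := by
  set a : ℤ → ℝ := fun k => Function.surjInv hsurj (W x + k)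
  have hWa : ∀ k, W (a k) = W x + k := fun k => Function.surjInv_eq hsurj _
  have ha0 : a 0 = x := hW.injective (by simp [hWa])
  set m : ℤ → ℝ := fun k => (a k + a (k + 1)) / 2
  have hradius : ∀ k, d (m k) = (a (k + 1) - a k) / 2 := fun k =>
    radius_eq_of_sub_eq_one hW hd (by rw [hWa, hWa]; push_cast; ring)
  have hm_lo : ∀ k, m k - d (m k) = a k := fun k => by rw [hradius]; ring
  have hm_hi : ∀ k, m k + d (m k) = a (k + 1) := fun k => by rw [hradius]; ring
  refine ⟨fun n => m (if 0 < n then n - 1 else n), fun n hn => ?_, fun n hn => ?_, ?_, ?_, ?_⟩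
  · simp only [if_pos (show (0 : ℤ) < n + 1 by omega), if_pos (show (0 : ℤ) < n by omega),
      add_sub_cancel_right, hm_lo, hm_hi, sub_add_cancel]
  · simp only [if_neg (show ¬(0 : ℤ) < n - 1 by omega), if_neg (show ¬(0 : ℤ) < n by omega),
      hm_lo, hm_hi, sub_add_cancel]
  · simp [hm_lo, ha0]
  · simp [hm_hi, ha0]
  · refine eq_univ_of_forall fun y => ?_
    set k := ⌊W y - W x⌋
    have hk_lo : a k ≤ y := hW.le_iff_le.mp (by rw [hWa]; linarith [Int.floor_le (W y - W x)])
    have hk_hi : y ≤ a (k + 1) := hW.le_iff_le.mp (by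
      rw [hWa]; push_cast; linarith [Int.lt_floor_add_one (W y - W x)])
    simp only [mem_iUnion, mem_ofPred_eq]
    by_cases hk : 0 ≤ k
    · refine ⟨k + 1, by omega, ?_⟩
      simp only [if_pos (show (0 : ℤ) < k + 1 by omega), add_sub_cancel_right, hm_lo, hm_hi]
      exact ⟨hk_lo, hk_hi⟩
    · refine ⟨k, by omega, ?_⟩
      simp only [if_neg (show ¬(0 : ℤ) < k by omega), hm_lo, hm_hi]
      exact ⟨hk_lo, hk_hi⟩

end Covering

section Concrete

variable {r q d1 d2 d : ℝ → ℝ}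

theorem inv_mul_hF_eq {t : ℝ} (hφ : 0 < phiF r d1 t) (hψ : 0 < psiF r d2 t) :
    (r t * hF r d1 d2 t)⁻¹ = (r t)⁻¹ / phiF r d1 t + (r t)⁻¹ / psiF r d2 t := by
  unfold hF
  field_simp
  ring

theorem isWindowMajorant_of_cond12 (h12 : Cond12 r q) (hd1 : IsD1 r q d1) (hd2 : IsD2 r q d2)
    (hd : IsD r (hF r d1 d2) d) :
    IsWindowMajorant (fun t => (r t)⁻¹) (fun t => (r t * hF r d1 d2 t)⁻¹) (fun t => t - d1 t)
      (fun t => t + d2 t) := by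
  have hr := h12.1
  have hw : ∀ t, 0 < (r t)⁻¹ := fun t => inv_pos.2 (hr t)
  have hwi := h12.2.2.1.intervalIntegrable
  have hφ : ∀ t, 0 < phiF r d1 t := fun t =>
    intervalIntegral_pos_of_pos_on (hwi _ _) (fun s _ => hw s) (by linarith [(hd1 t).1])
  have hψ : ∀ t, 0 < psiF r d2 t := fun t =>
    intervalIntegral_pos_of_pos_on (hwi _ _) (fun s _ => hw s) (by linarith [(hd2 t).1])
  exact
    { pos := hw
      intervalIntegrable := hwi
      intervalIntegrable_majorant := (locallyIntegrable_of_integral_ne_zero (fun x => (hd x).1)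
        fun x => by rw [(hd x).2]; exact one_ne_zero).intervalIntegrable
      monotone_lo := monotone_sub_of_isD1 h12 hd1
      monotone_hi := monotone_add_of_isD2 h12 hd2
      lo_lt := fun t => by linarith [(hd1 t).1]
      lt_hi := fun t => by linarith [(hd2 t).1]
      div_integral_lo_le := fun t => by
        rw [inv_mul_hF_eq (hφ t) (hψ t)]
        exact le_add_of_nonneg_right (div_pos (hw t) (hψ t)).le
      div_integral_hi_le := fun t => by
        rw [inv_mul_hF_eq (hφ t) (hψ t)]
        exact le_add_of_nonneg_left (div_pos (hw t) (hφ t)).le }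

end Concrete

theorem stmt_14_general (r q d1 d2 d : ℝ → ℝ) (h12 : Cond12 r q)
    (hd1 : IsD1 r q d1) (hd2 : IsD2 r q d2) (hd : IsD r (hF r d1 d2) d) :
    ∀ x : ℝ, ∃ c : ℤ → ℝ,
      (∀ n : ℤ, 1 ≤ n → c (n + 1) - d (c (n + 1)) = c n + d (c n)) ∧
      (∀ n : ℤ, n ≤ -1 → c (n - 1) + d (c (n - 1)) = c n - d (c n)) ∧
      c 1 - d (c 1) = x ∧ c (-1) + d (c (-1)) = x ∧
      (⋃ n ∈ {m : ℤ | m ≠ 0}, Icc (c n - d (c n)) (c n + d (c n))) = univ := by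
  have H := isWindowMajorant_of_cond12 h12 hd1 hd2 hd
  refine exists_chain_covering H.strictMono_primitive H.surjective_primitive fun c => ?_
  rw [integral_interval_sub_left (H.intervalIntegrable_majorant _ _)
    (H.intervalIntegrable_majorant _ _)]
  exact (hd c).2

/-- Lemma 2.10: under (1.2) and (1.6), for every `x ∈ ℝ` there exists an
`ℝ(x)`-covering of `ℝ`: points `(x_n)_{n ∈ ℤ, n ≠ 0}` whose segments
`Δ_n = [x_n - d(x_n), x_n + d(x_n)]` chain as in Definition 2.9 and cover `ℝ`. -/
theorem stmt_14 (r q d1 d2 d : ℝ → ℝ) (h12 : Cond12 r q) (h16 : Cond16 r q)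
    (hd1 : IsD1 r q d1) (hd2 : IsD2 r q d2) (hd : IsD r (hF r d1 d2) d) :
    ∀ x : ℝ, ∃ c : ℤ → ℝ,
      (∀ n : ℤ, 1 ≤ n → c (n + 1) - d (c (n + 1)) = c n + d (c n)) ∧
      (∀ n : ℤ, n ≤ -1 → c (n - 1) + d (c (n - 1)) = c n - d (c n)) ∧
      c 1 - d (c 1) = x ∧ c (-1) + d (c (-1)) = x ∧
      (⋃ n ∈ {m : ℤ | m ≠ 0}, Icc (c n - d (c n)) (c n + d (c n))) = univ :=
  stmt_14_general r q d1 d2 d h12 hd1 hd2 hd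
end
end

section
/- Suppose conditions (1.2) and (1.5) hold, and let p ∈ [1,∞). Then the homogeneous equation (r(x)z'(x))' = q(x)z(x) on ℝ has no solution z ∈ L_p(ℝ) except z ≡ 0. -/
open MeasureTheory Set Filter
open scoped ENNReal

noncomputable section

/-! With `w = r z'`, the product `z w` has derivative `r z'² + q z² ≥ 0`, so it is nondecreasing.
Hence it keeps the sign of `z(x₀) w(x₀)` on `[x₀, ∞)` or on `(-∞, x₀]`, and on that half-line
`(z²)' = 2 z w / r` has the same sign, so `|z| ≥ |z(x₀)|` there. A solution with `z(x₀) ≠ 0` is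
therefore bounded away from zero on a half-line and cannot lie in `L_p`. -/

def IsIntervalPrimitive (F f : ℝ → ℝ) : Prop :=
  (∀ a b : ℝ, IntervalIntegrable f volume a b) ∧ ∀ x : ℝ, F x = F 0 + ∫ t in (0:ℝ)..x, f t

namespace IsIntervalPrimitive

variable {F f G g : ℝ → ℝ}

lemma sub_eq_integral (hF : IsIntervalPrimitive F f) (a b : ℝ) : F b - F a = ∫ t in a..b, f t := by
  have h := intervalIntegral.integral_add_adjacent_intervals (hF.1 0 a) (hF.1 a b)
  rw [hF.2 a, hF.2 b]
  linarith

lemma eq_add_integral (hF : IsIntervalPrimitive F f) (a : ℝ) :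
    F = fun x => F a + ∫ t in a..x, f t := by
  funext x
  linarith [hF.sub_eq_integral a x]

lemma continuous (hF : IsIntervalPrimitive F f) : Continuous F := by
  rw [hF.eq_add_integral 0]
  exact continuous_const.add (intervalIntegral.continuous_primitive hF.1 0)

lemma absolutelyContinuousOnInterval (hF : IsIntervalPrimitive F f) (a b : ℝ) :
    AbsolutelyContinuousOnInterval F a b := by
  rw [hF.eq_add_integral a]
  exact (LipschitzWith.const (F a)).lipschitzOnWith.absolutelyContinuousOnInterval.add
    ((hF.1 a b).absolutelyContinuousOnInterval_intervalIntegral left_mem_uIcc)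

lemma ae_deriv_eq (hF : IsIntervalPrimitive F f) (a b : ℝ) :
    ∀ᵐ x, x ∈ uIcc a b → deriv F x = f x := by
  filter_upwards [(hF.1 a b).ae_hasDerivAt_integral] with x hx hxab
  rw [hF.eq_add_integral a]
  exact ((hx hxab a left_mem_uIcc).const_add (F a)).deriv

lemma mul (hF : IsIntervalPrimitive F f) (hG : IsIntervalPrimitive G g) :
    IsIntervalPrimitive (fun x => F x * G x) (fun x => f x * G x + F x * g x) := by
  refine ⟨fun a b => ((hF.1 a b).mul_continuousOn hG.continuous.continuousOn).add
    ((hG.1 a b).continuousOn_mul hF.continuous.continuousOn), fun x => ?_⟩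
  have hparts := (hF.absolutelyContinuousOnInterval 0 x).integral_deriv_mul_eq_sub
    (hG.absolutelyContinuousOnInterval 0 x)
  have hderiv : (∫ t in (0:ℝ)..x, deriv F t * G t + F t * deriv G t) =
      ∫ t in (0:ℝ)..x, f t * G t + F t * g t := by
    refine intervalIntegral.integral_congr_ae ?_
    filter_upwards [hF.ae_deriv_eq 0 x, hG.ae_deriv_eq 0 x] with t hFt hGt ht
    rw [hFt (uIoc_subset_uIcc ht), hGt (uIoc_subset_uIcc ht)]
  linarith

lemma monotoneOn (hF : IsIntervalPrimitive F f) {s : Set ℝ} (hs : s.OrdConnected)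
    (hf : ∀ x ∈ s, 0 ≤ f x) : MonotoneOn F s := by
  intro a ha b hb hab
  have := intervalIntegral.integral_nonneg (μ := volume) hab fun t ht => hf t (hs.out ha hb ht)
  linarith [hF.sub_eq_integral a b]

lemma antitoneOn (hF : IsIntervalPrimitive F f) {s : Set ℝ} (hs : s.OrdConnected)
    (hf : ∀ x ∈ s, f x ≤ 0) : AntitoneOn F s := by
  intro a ha b hb hab
  have := intervalIntegral.integral_mono_on hab (hF.1 a b) intervalIntegrable_const
    fun t ht => hf t (hs.out ha hb ht)
  simp only [intervalIntegral.integral_const, smul_zero] at this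
  linarith [hF.sub_eq_integral a b]

end IsIntervalPrimitive

lemma not_memLp_of_le_norm {α E : Type*} [MeasurableSpace α] [NormedAddCommGroup E]
    {μ : Measure α} {f : α → E} {p : ℝ≥0∞} (hp_ne_zero : p ≠ 0) (hp_ne_top : p ≠ ∞) {s : Set α}
    (hs : μ s = ∞) {c : ℝ} (hc : 0 < c) (hf : ∀ x ∈ s, c ≤ ‖f x‖) : ¬ MemLp f p μ := by
  intro hmem
  have hlt := hmem.meas_ge_lt_top hp_ne_zero hp_ne_top (ε := c.toNNReal) (by simpa using hc)
  refine (measure_mono (fun x hx => ?_) |>.trans_lt hlt).ne hs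
  simpa [← NNReal.coe_le_coe, hc.le] using hf x hx

namespace IsSolutionHom

variable {r q z z' : ℝ → ℝ}

lemma isIntervalPrimitive (h : IsSolutionHom r q z z') : IsIntervalPrimitive z z' :=
  ⟨h.1, h.2.1⟩

lemma isIntervalPrimitive_flux (h : IsSolutionHom r q z z') :
    IsIntervalPrimitive (fun x => r x * z' x) (fun x => q x * z x) := by
  have hflux := h.2.2
  simp only [sub_zero] at hflux
  exact hflux

lemma monotone_mul_flux (hr : ∀ x, 0 ≤ r x) (hq : ∀ x, 0 ≤ q x)
    (h : IsSolutionHom r q z z') : Monotone fun x => z x * (r x * z' x) := by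
  refine monotoneOn_univ.mp <| (h.isIntervalPrimitive.mul h.isIntervalPrimitive_flux).monotoneOn
    ordConnected_univ fun x _ => ?_
  nlinarith [mul_nonneg (hr x) (mul_self_nonneg (z' x)), mul_nonneg (hq x) (mul_self_nonneg (z x))]

lemma abs_le_abs_on_half_line (hr : ∀ x, 0 < r x) (hq : ∀ x, 0 ≤ q x)
    (h : IsSolutionHom r q z z') (x₀ : ℝ) :
    (∀ t ∈ Ici x₀, |z x₀| ≤ |z t|) ∨ (∀ t ∈ Iic x₀, |z x₀| ≤ |z t|) := by
  have hmono := h.monotone_mul_flux (fun x => (hr x).le) hq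
  have hsq := h.isIntervalPrimitive.mul h.isIntervalPrimitive
  have hsign (t : ℝ) : z t * (r t * z' t) = r t * (z' t * z t + z t * z' t) / 2 := by ring
  rcases le_total 0 (z x₀ * (r x₀ * z' x₀)) with hx₀ | hx₀
  · refine Or.inl fun t ht => sq_le_sq.mp ?_
    simp only [sq]
    refine hsq.monotoneOn ordConnected_Ici (fun s hs => ?_) self_mem_Ici ht ht
    have : 0 ≤ z s * (r s * z' s) := hx₀.trans (hmono hs)
    nlinarith [hr s, hsign s]
  · refine Or.inr fun t ht => sq_le_sq.mp ?_
    simp only [sq]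
    refine hsq.antitoneOn ordConnected_Iic (fun s hs => ?_) ht self_mem_Iic ht
    have : z s * (r s * z' s) ≤ 0 := (hmono hs).trans hx₀
    nlinarith [hr s, hsign s]

end IsSolutionHom

theorem stmt_15_general (r q : ℝ → ℝ) (h12 : Cond12 r q) (p : ℝ) (hp : 1 ≤ p) :
    ∀ z z' : ℝ → ℝ, IsSolutionHom r q z z' → MemLP z p → ∀ x : ℝ, z x = 0 := by
  intro z z' hz hmem x
  by_contra hx
  have hp0 : ENNReal.ofReal p ≠ 0 := by simp only [ne_eq, ENNReal.ofReal_eq_zero]; linarith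
  have hzx : 0 < |z x| := abs_pos.mpr hx
  rcases hz.abs_le_abs_on_half_line h12.1 h12.2.1 x with h | h
  · exact not_memLp_of_le_norm hp0 ENNReal.ofReal_ne_top Real.volume_Ici hzx h hmem
  · exact not_memLp_of_le_norm hp0 ENNReal.ofReal_ne_top Real.volume_Iic hzx h hmem

/-- Lemma 2.12: under (1.2) and (1.5), for `p ∈ [1,∞)` the homogeneous
equation `(r z')' = q z` has no solution `z ∈ L_p(ℝ)` except `z ≡ 0`. -/
theorem stmt_15 (r q : ℝ → ℝ) (h12 : Cond12 r q) (h15 : Cond15 q) (p : ℝ) (hp : 1 ≤ p) :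
    ∀ z z' : ℝ → ℝ, IsSolutionHom r q z z' → MemLP z p → ∀ x : ℝ, z x = 0 :=
  stmt_15_general r q h12 p hp

end
end
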